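/- Every stable monomial ideal I ⊆ R has linear quotients: there exists an ordering (m_1,…,m_k) of the minimal monomial generators of I such that for every j the colon ideal ⟨m_1,…,m_{j−1}⟩ : m_j is generated by a subset of the variables. -/

import Mathlib

open MvPolynomial

/-- The monomial ideal generated by a set of exponent vectors. -/
noncomputable def genIdeal (K : Type*) [Field K] {n : ℕ} (ms : Set (Fin n →₀ ℕ)) :
    Ideal (MvPolynomial (Fin n) K) :=
  Ideal.span ((fun u => MvPolynomial.monomial u (1 : K)) '' ms)

/-- The colon ideal `⟨m_1, …, m_{j-1}⟩ : m_j`. -/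
noncomputable def colonJ (K : Type*) [Field K] {n k : ℕ} (m : Fin k → (Fin n →₀ ℕ))
    (j : Fin k) : Ideal (MvPolynomial (Fin n) K) :=
  Submodule.colon (genIdeal K {u | ∃ i : Fin k, i < j ∧ u = m i})
    (Ideal.span {MvPolynomial.monomial (m j) (1 : K)})

/-- `I` has linear quotients w.r.t. the ordering `m_1,…,m_k` of its generators:
each colon ideal is generated by a subset of the variables. -/
def HasLinearQuotients (K : Type*) [Field K] {n k : ℕ}
    (m : Fin k → (Fin n →₀ ℕ)) : Prop :=
  ∀ j : Fin k, ∃ S : Set (Fin n),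
    colonJ K m j = Ideal.span ((fun s => (MvPolynomial.X s : MvPolynomial (Fin n) K)) '' S)

/-- `set(m_j) = {i : x_i ∈ ⟨m_1,…,m_{j-1}⟩ : m_j}`. -/
def mset (K : Type*) [Field K] {n k : ℕ} (m : Fin k → (Fin n →₀ ℕ)) (j : Fin k) :
    Set (Fin n) :=
  {t | (MvPolynomial.X t : MvPolynomial (Fin n) K) ∈ colonJ K m j}

/-- The `m i` are minimal monomial generators: none divides another. -/
def MinimalGens {n k : ℕ} (m : Fin k → (Fin n →₀ ℕ)) : Prop :=
  ∀ i j : Fin k, m i ≤ m j → i = j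

/-- `b` is the decomposition function: for a monomial `u ∈ I`, `b u` is the smallest
index `j` with `u ∈ ⟨m_1,…,m_j⟩`. -/
def IsDecompositionFunction (K : Type*) [Field K] {n k : ℕ}
    (m : Fin k → (Fin n →₀ ℕ)) (b : (Fin n →₀ ℕ) → Fin k) : Prop :=
  ∀ u : Fin n →₀ ℕ, MvPolynomial.monomial u (1 : K) ∈ genIdeal K (Set.range m) →
    (MvPolynomial.monomial u (1 : K) ∈ genIdeal K {v | ∃ i : Fin k, i ≤ b u ∧ v = m i}) ∧
    (∀ j : Fin k,
      MvPolynomial.monomial u (1 : K) ∈ genIdeal K {v | ∃ i : Fin k, i ≤ j ∧ v = m i} →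
      b u ≤ j)

/-- The decomposition function is regular: `set(b(x_t·m)) ⊆ set(m)` for every
generator `m` and every `t ∈ set(m)`. -/
def IsRegularDecomp (K : Type*) [Field K] {n k : ℕ}
    (m : Fin k → (Fin n →₀ ℕ)) (b : (Fin n →₀ ℕ) → Fin k) : Prop :=
  ∀ j : Fin k, ∀ t ∈ mset K m j,
    mset K m (b (m j + Finsupp.single t 1)) ⊆ mset K m j

/-! Order the minimal generators lexicographically decreasingly; the colon ideal of `m_j` is then
`⟨x_t : t < max(m_j)⟩`. If an earlier `m_i` divides `v · m_j`, then at the first index `q` where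
the two differ `m_i` has the larger exponent, so `x_q ∣ v`, and `q < max(m_j)` since otherwise
`m_j ∣ m_i`. Conversely, for `t < max(m_j)` stability puts `x_t · m_j / x_{max(m_j)}` in `I`; its
Eliahou–Kervaire divisor is a generator lexicographically larger than `m_j`, hence an earlier
generator dividing `x_t · m_j`. Writing `t < max(m_j)` as `t < r` for some `r` in the support of
`m_j` also covers `m_j = 1`, where the colon ideal is zero. -/

section MonomialIdeals

variable (K : Type*) [Field K] {n : ℕ}

theorem monomial_mem_genIdeal_iff {ms : Set (Fin n →₀ ℕ)} {v : Fin n →₀ ℕ} :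
    monomial v (1 : K) ∈ genIdeal K ms ↔ ∃ u ∈ ms, u ≤ v := by
  classical
  rw [genIdeal, mem_ideal_span_monomial_image, support_monomial, if_neg one_ne_zero]
  simp

variable {K}

theorem mem_colonJ_iff {k : ℕ} {m : Fin k → (Fin n →₀ ℕ)} {j : Fin k}
    {p : MvPolynomial (Fin n) K} :
    p ∈ colonJ K m j ↔
      p * monomial (m j) 1 ∈ genIdeal K {u | ∃ i : Fin k, i < j ∧ u = m i} :=
  Submodule.mem_colon_span_singleton

end MonomialIdeals

theorem Finset.exists_strictAnti_range_eq {α : Type*} [LinearOrder α] (s : Finset α) {k : ℕ}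
    (h : s.card = k) : ∃ e : Fin k → α, StrictAnti e ∧ Set.range e = s :=
  ⟨s.orderEmbOfFin h ∘ Fin.rev, (s.orderEmbOfFin h).strictMono.comp_strictAnti Fin.rev_strictAnti,
    by rw [Fin.rev_surjective.range_comp, s.range_orderEmbOfFin h]⟩

section ExponentVectors

variable {σ : Type*} [LinearOrder σ]

theorem Finsupp.exists_lt_of_toLex_lt_of_not_le {a b : σ →₀ ℕ} (hlex : toLex b < toLex a)
    (hle : ¬ b ≤ a) : ∃ q, b q < a q ∧ ∃ r ∈ b.support, q < r := by
  obtain ⟨q, heq, hlt⟩ := Finsupp.lex_def.1 hlex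
  refine ⟨q, hlt, ?_⟩
  by_contra! hsupp
  refine hle (Finsupp.le_def.2 fun x => ?_)
  rcases lt_trichotomy x q with hx | rfl | hx
  · exact (heq x hx).le
  · exact hlt.le
  · rw [Finsupp.notMem_support_iff.1 fun hx' => (hsupp x hx').not_gt hx]
    exact Nat.zero_le _

theorem Finsupp.add_single_le_of_lt {u w : σ →₀ ℕ} {s : σ} (h : u ≤ w) (hs : u s < w s) :
    u + Finsupp.single s 1 ≤ w := by
  refine Finsupp.le_def.2 fun x => ?_
  have hx := Finsupp.le_def.1 h x
  rw [Finsupp.add_apply, Finsupp.single_apply]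
  split_ifs with hsx
  · subst hsx; omega
  · omega

/-- `w = u · v` with `max(u) ≤ min(v)`: the Eliahou–Kervaire decomposition of `w`. -/
def IsCanonicalDivisor (u w : σ →₀ ℕ) : Prop :=
  u ≤ w ∧ ∀ s, u s < w s → ∀ r ∈ u.support, r ≤ s

theorem IsCanonicalDivisor.toLex_lt {a u w : σ →₀ ℕ} {t M : σ} (htM : t < M)
    (hwt : a t < w t) (hwM : w M < a M) (hw : ∀ x ≠ M, a x ≤ w x)
    (hu : IsCanonicalDivisor u w) (hmin : u ≤ a → u = a) : toLex a < toLex u := by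
  by_contra! hle
  rcases hle.eq_or_lt with heq | hlt
  · have := Finsupp.le_def.1 hu.1 M
    rw [toLex_inj.1 heq] at this
    omega
  obtain ⟨p, heq, hlt⟩ := Finsupp.lex_def.1 hlt
  obtain ⟨s, hsp, hs⟩ : ∃ s ≤ p, u s < w s := by
    rcases eq_or_ne p M with rfl | hpM
    · exact ⟨t, htM.le, (heq t htM).trans_lt hwt⟩
    · exact ⟨p, le_rfl, hlt.trans_le (hw p hpM)⟩
  have hua : u ≤ a := by
    refine Finsupp.le_def.2 fun x => ?_
    rcases lt_trichotomy x p with hx | rfl | hx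
    · exact (heq x hx).le
    · exact hlt.le
    · rw [Finsupp.notMem_support_iff.1 fun hx' => (hu.2 s hs x hx').not_gt (hsp.trans_lt hx)]
      exact Nat.zero_le _
  exact hlt.ne (by rw [hmin hua])

theorem Finsupp.exists_strictAnti_toLex_range_eq (gens : Finset (σ →₀ ℕ)) :
    ∃ m : Fin gens.card → σ →₀ ℕ, StrictAnti (toLex ∘ m) ∧ Set.range m = gens := by
  obtain ⟨e, he, hrange⟩ :=
    (gens.map toLex.toEmbedding).exists_strictAnti_range_eq (Finset.card_map _)
  refine ⟨ofLex ∘ e, he, ?_⟩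
  rw [Set.range_comp, hrange, Finset.coe_map]
  ext u
  simp

end ExponentVectors

section Stable

variable {n : ℕ}

def IsStableGens (gens : Finset (Fin n →₀ ℕ)) : Prop :=
  ∀ u ∈ gens, ∀ hne : u.support.Nonempty, ∀ s < u.support.max' hne,
    ∃ v ∈ gens, v ≤ u + Finsupp.single s 1 - Finsupp.single (u.support.max' hne) 1

/-- A generator dividing `w` of least weight `∑ i • u_i` is canonical: otherwise a stability
move, which trades `x_{max(u)}` for a variable of smaller index, yields a lighter one. -/
theorem IsStableGens.exists_isCanonicalDivisor {gens : Finset (Fin n →₀ ℕ)}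
    (hst : IsStableGens gens) {w : Fin n →₀ ℕ} (hw : ∃ u ∈ gens, u ≤ w) :
    ∃ u ∈ gens, IsCanonicalDivisor u w := by
  set weight : (Fin n →₀ ℕ) →+ ℕ := Finsupp.weight (R := ℕ) fun i : Fin n => (i : ℕ)
  obtain ⟨u, hu, hu_min⟩ :=
    (gens.filter (· ≤ w)).exists_min_image weight (by simpa [Finset.filter_nonempty_iff] using hw)
  rw [Finset.mem_filter] at hu
  refine ⟨u, hu.1, hu.2, fun s hs r hr => ?_⟩
  by_contra! hsr
  have hne : u.support.Nonempty := ⟨r, hr⟩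
  set M := u.support.max' hne
  have hsM : s < M := hsr.trans_le (u.support.le_max' r hr)
  have huM : (u + Finsupp.single s 1 : Fin n →₀ ℕ) M ≠ 0 := by
    simpa [Finsupp.single_apply, hsM.ne] using Finsupp.mem_support_iff.1 (u.support.max'_mem hne)
  obtain ⟨v, hv, hvle⟩ := hst u hu.1 hne s hsM
  have hvw : v ≤ w := hvle.trans (tsub_le_self.trans (Finsupp.add_single_le_of_lt hu.2 hs))
  have hmove : weight (u + Finsupp.single s 1 - Finsupp.single M 1) + M = weight u + s := by
    rw [Finsupp.weight_sub_single_add huM, map_add, Finsupp.weight_single, one_smul]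
  have hvu : weight v ≤ weight (u + Finsupp.single s 1 - Finsupp.single M 1) := by
    obtain ⟨c, hc⟩ := exists_add_of_le hvle
    rw [hc, map_add]
    exact Nat.le_add_right _ _
  have := hu_min v (Finset.mem_filter.2 ⟨hv, hvw⟩)
  have : (s : ℕ) < M := hsM
  omega

theorem IsStableGens.exists_lt_le_add_single {gens : Finset (Fin n →₀ ℕ)}
    (hst : IsStableGens gens) (hmin : ∀ u ∈ gens, ∀ v ∈ gens, u ≤ v → u = v) {k : ℕ}
    {m : Fin k → (Fin n →₀ ℕ)} (hanti : StrictAnti (toLex ∘ m)) (hrange : Set.range m = gens)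
    {j : Fin k} {t r : Fin n} (hr : r ∈ (m j).support) (htr : t < r) :
    ∃ i < j, m i ≤ m j + Finsupp.single t 1 := by
  have hmj : m j ∈ gens := by rw [← Finset.mem_coe, ← hrange]; exact Set.mem_range_self j
  have hne : (m j).support.Nonempty := ⟨r, hr⟩
  set M := (m j).support.max' hne
  have htM : t < M := htr.trans_le ((m j).support.le_max' r hr)
  have hmjM : m j M ≠ 0 := Finsupp.mem_support_iff.1 ((m j).support.max'_mem hne)
  set w := m j + Finsupp.single t 1 - Finsupp.single M 1
  have hwt : m j t < w t := by simp [w, htM.ne']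
  have hwM : w M < m j M := by simp [w, htM.ne]; omega
  have hw : ∀ x ≠ M, m j x ≤ w x := fun x hx => by simp [w, Finsupp.single_apply, Ne.symm hx]
  obtain ⟨u, hu, hcanon⟩ := hst.exists_isCanonicalDivisor (hst (m j) hmj hne t htM)
  have hlex := hcanon.toLex_lt htM hwt hwM hw (hmin u hu (m j) hmj)
  obtain ⟨i, rfl⟩ : u ∈ Set.range m := by simpa [hrange] using hu
  exact ⟨i, hanti.lt_iff_gt.1 hlex, hcanon.1.trans tsub_le_self⟩

end Stable

section LinearQuotients

variable {K : Type*} [Field K] {n k : ℕ} {m : Fin k → (Fin n →₀ ℕ)}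

theorem colonJ_le_span_X (hanti : StrictAnti (toLex ∘ m)) (hmin : MinimalGens m) (j : Fin k) :
    colonJ K m j ≤ Ideal.span (X '' {t | ∃ r ∈ (m j).support, t < r}) := by
  intro p hp
  rw [mem_colonJ_iff, genIdeal, mem_ideal_span_monomial_image] at hp
  rw [mem_ideal_span_X_image]
  intro v hv
  obtain ⟨_, ⟨i, hij, rfl⟩, hle⟩ :=
    hp (v + m j) (by rwa [mem_support_iff, coeff_mul_monomial, mul_one, ← mem_support_iff])
  obtain ⟨q, hq, hqS⟩ := Finsupp.exists_lt_of_toLex_lt_of_not_le (hanti hij)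
    fun h => hij.ne' (hmin j i h)
  refine ⟨q, hqS, ?_⟩
  have := Finsupp.le_def.1 hle q
  rw [Finsupp.add_apply] at this
  omega

theorem span_X_le_colonJ {j : Fin k}
    (hdiv : ∀ t, ∀ r ∈ (m j).support, t < r → ∃ i < j, m i ≤ m j + Finsupp.single t 1) :
    Ideal.span (X '' {t | ∃ r ∈ (m j).support, t < r}) ≤ colonJ K m j := by
  rw [Ideal.span_le]
  rintro _ ⟨t, ⟨r, hr, htr⟩, rfl⟩
  obtain ⟨i, hij, hle⟩ := hdiv t r hr htr
  rw [SetLike.mem_coe, mem_colonJ_iff, X, monomial_mul, one_mul, monomial_mem_genIdeal_iff]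
  exact ⟨m i, ⟨i, hij, rfl⟩, by rwa [add_comm]⟩

end LinearQuotients

/-- every stable monomial ideal has linear quotients: there is an
ordering `m : Fin (gens.card) → (Fin n →₀ ℕ)` of the minimal monomial generators
`gens` such that every colon ideal `⟨m_1,…,m_{j−1}⟩ : m_j` is generated by a subset of
the variables.  Stability: for every monomial `w ∈ I` and every `i < max(w)`, the
monomial `x_i·w/x_{max(w)}` lies in `I`. -/
theorem stmt19 (K : Type*) [Field K] {n : ℕ} (gens : Finset (Fin n →₀ ℕ))
    (hmin : ∀ u ∈ gens, ∀ v ∈ gens, u ≤ v → u = v)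
    (hstable : ∀ u : Fin n →₀ ℕ,
      MvPolynomial.monomial u (1 : K) ∈ genIdeal K ↑gens →
      ∀ hne : u.support.Nonempty, ∀ i : Fin n, i < u.support.max' hne →
        MvPolynomial.monomial
            (u + Finsupp.single i 1 - Finsupp.single (u.support.max' hne) 1) (1 : K) ∈
          genIdeal K ↑gens) :
    ∃ m : Fin gens.card → (Fin n →₀ ℕ),
      Function.Injective m ∧ (∀ a, m a ∈ gens) ∧
      HasLinearQuotients K m := by
  have hst : IsStableGens gens := fun u hu hne s hs =>
    (monomial_mem_genIdeal_iff K).1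
      (hstable u ((monomial_mem_genIdeal_iff K).2 ⟨u, hu, le_rfl⟩) hne s hs)
  obtain ⟨m, hanti, hrange⟩ := Finsupp.exists_strictAnti_toLex_range_eq gens
  have hmem : ∀ a, m a ∈ gens := fun a => by rw [← Finset.mem_coe, ← hrange]; exact ⟨a, rfl⟩
  have hinj : Function.Injective m := hanti.injective.of_comp
  have hminm : MinimalGens m := fun i j h => hinj (hmin _ (hmem i) _ (hmem j) h)
  refine ⟨m, hinj, hmem, fun j => ⟨_, le_antisymm (colonJ_le_span_X hanti hminm j) ?_⟩⟩
  exact span_X_le_colonJ fun t r hr htr => hst.exists_lt_le_add_single hmin hanti hrange hr htr
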